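/- Every bounded harmonic function for the simple random walk on the half-plane one-way lattice ℍ is constant; that is, if h : ℤ² → ℝ is bounded and satisfies h(x,y) = (1/3)·(h(x,y+1) + h(x,y−1) + h(x+sgn(y),y)) for all (x,y) with y ≠ 0, and h(x,0) = (1/2)·(h(x,1) + h(x,−1)) for all x, then h is constant. (The Poisson boundary of the simple random walk on ℍ is trivial.) -/

import Mathlib

/-!
Let `D x y = h (x + 1) y - h x y`, again harmonic, and `S = sup D`. Off the axis the walk moves
horizontally only in the direction `sgn y`, so harmonicity of `D` gives
`S - D (x + sgn y) y ≤ 3 (S - D x y)`: a nearly maximal increment stays nearly maximal for `n`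
steps along the drift, its deficit growing at most like `3ⁿ`. Summing these increments along a
row, `n S ≤ 2 C + 2 · 3ⁿ (S - D x y)` with `C` a bound for `|h|`, and letting `D x y` approach `S`
gives `n S ≤ 2 C` for all `n`, so `S ≤ 0`. The same for `-h` makes `h` constant along rows; then
`y ↦ h x y` is a bounded solution of `g (y + 1) + g (y - 1) = 2 g y`, hence affine, hence constant.
-/

namespace HalfPlaneLattice

theorem nonpos_of_forall_nat_mul_le {a b : ℝ} (h : ∀ n : ℕ, n * a ≤ b) : a ≤ 0 := by
  by_contra! ha
  obtain ⟨n, hn⟩ := exists_nat_gt (b / a)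
  exact absurd (h n) (not_le.2 ((div_lt_iff₀ ha).1 hn))

theorem eq_of_bounded_of_add_eq_two_mul {g : ℤ → ℝ} {C : ℝ} (hC : ∀ y, |g y| ≤ C)
    (hg : ∀ y, g (y + 1) + g (y - 1) = 2 * g y) (y y' : ℤ) : g y = g y' := by
  set c := g 1 - g 0
  have hstep : ∀ y, g (y + 1) - g y = c := by
    have hper : Function.Periodic (fun y => g (y + 1) - g y) 1 := fun y => by
      have := hg (y + 1)
      rw [add_sub_cancel_right] at this
      dsimp only
      linarith
    intro y
    simpa using hper.int_mul_eq y
  have haff : ∀ y : ℤ, g y = g 0 + y * c := by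
    have hper : Function.Periodic (fun y : ℤ => g y - y * c) 1 := fun y => by
      simp only [Int.cast_add, Int.cast_one]
      linarith [hstep y]
    intro y
    linarith [show g y - y * c = g 0 by simpa using hper.int_mul_eq y]
  have hbound : ∀ z : ℤ, z * c ≤ 2 * C := fun z => by
    linarith [haff z, (abs_le.1 (hC z)).2, (abs_le.1 (hC 0)).1]
  have hc : c = 0 := le_antisymm
    (nonpos_of_forall_nat_mul_le fun n => by exact_mod_cast hbound n)
    (neg_nonpos.1 <| nonpos_of_forall_nat_mul_le fun n => by
      simpa using hbound (-n))
  rw [haff y, haff y', hc]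
  ring

structure IsHarmonic (h : ℤ → ℤ → ℝ) : Prop where
  off_axis : ∀ x y : ℤ, y ≠ 0 →
    h x y = (1 / 3) * (h x (y + 1) + h x (y - 1) + h (x + Int.sign y) y)
  on_axis : ∀ x : ℤ, h x 0 = (1 / 2) * (h x 1 + h x (-1))

def horizDiff (h : ℤ → ℤ → ℝ) (x y : ℤ) : ℝ := h (x + 1) y - h x y

namespace IsHarmonic

variable {f g h : ℤ → ℤ → ℝ}

theorem neg (hh : IsHarmonic h) : IsHarmonic (-h) where
  off_axis x y hy := by simp only [Pi.neg_apply, hh.off_axis x y hy]; ring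
  on_axis x := by simp only [Pi.neg_apply, hh.on_axis x]; ring

theorem sub (hf : IsHarmonic f) (hg : IsHarmonic g) : IsHarmonic (f - g) where
  off_axis x y hy := by
    simp only [Pi.sub_apply, hf.off_axis x y hy, hg.off_axis x y hy]; ring
  on_axis x := by simp only [Pi.sub_apply, hf.on_axis x, hg.on_axis x]; ring

theorem comp_add_right (hh : IsHarmonic h) (a : ℤ) : IsHarmonic fun x y => h (x + a) y where
  off_axis x y hy := by rw [hh.off_axis _ y hy, add_right_comm x a]
  on_axis x := hh.on_axis (x + a)

theorem comp_neg (hh : IsHarmonic h) : IsHarmonic fun x y => h (-x) (-y) where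
  off_axis x y hy := by
    rw [hh.off_axis _ _ (neg_ne_zero.2 hy), Int.sign_neg, ← neg_add,
      show -y + 1 = -(y - 1) by ring, show -y - 1 = -(y + 1) by ring]
    ring
  on_axis x := by rw [neg_zero, hh.on_axis, neg_neg, add_comm (h (-x) 1)]

theorem horizDiff (hh : IsHarmonic h) : IsHarmonic (horizDiff h) :=
  (hh.comp_add_right 1).sub hh

variable {S : ℝ}

theorem sub_le_three_mul (hf : IsHarmonic f) (hS : ∀ x y, f x y ≤ S) (x : ℤ) {y : ℤ}
    (hy : y ≠ 0) : S - f (x + y.sign) y ≤ 3 * (S - f x y) := by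
  linarith [hf.off_axis x y hy, hS x (y + 1), hS x (y - 1)]

theorem sub_le_two_mul (hf : IsHarmonic f) (hS : ∀ x y, f x y ≤ S) (x : ℤ) :
    S - f x 1 ≤ 2 * (S - f x 0) := by
  linarith [hf.on_axis x, hS x (-1)]

theorem sub_le_three_pow_mul (hf : IsHarmonic f) (hS : ∀ x y, f x y ≤ S) (x : ℤ) {y : ℤ}
    (hy : 0 < y) (n : ℕ) : S - f (x + n) y ≤ 3 ^ n * (S - f x y) := by
  induction n with
  | zero => simp
  | succ n ih =>
    have hstep := hf.sub_le_three_mul hS (x + n) hy.ne'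
    rw [Int.sign_eq_one_of_pos hy] at hstep
    push_cast
    rw [← add_assoc, pow_succ]
    linarith

end IsHarmonic

variable {h : ℤ → ℤ → ℝ} {C S : ℝ}

theorem nat_mul_le_of_horizDiff_le_of_pos (hh : IsHarmonic h) (hC : ∀ x y, |h x y| ≤ C)
    (hS : ∀ x y, horizDiff h x y ≤ S) (x : ℤ) {y : ℤ} (hy : 0 < y) (n : ℕ) :
    n * S ≤ 2 * C + 3 ^ n * (S - horizDiff h x y) := by
  set e := S - horizDiff h x y
  have he : 0 ≤ e := sub_nonneg.2 (hS x y)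
  have hgeom : ∑ k ∈ Finset.range n, (3 : ℝ) ^ k = (3 ^ n - 1) / 2 := by
    rw [geom_sum_eq (by norm_num)]
    norm_num
  have hpow : (0 : ℝ) ≤ 3 ^ n * e := by positivity
  calc n * S ≤ n * S - (3 ^ n - 1) / 2 * e + 3 ^ n * e := by nlinarith
    _ = ∑ k ∈ Finset.range n, (S - 3 ^ k * e) + 3 ^ n * e := by
      rw [Finset.sum_sub_distrib, ← Finset.sum_mul, hgeom]
      simp
    _ ≤ ∑ k ∈ Finset.range n, horizDiff h (x + k) y + 3 ^ n * e := by
      gcongr with k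
      linarith [hh.horizDiff.sub_le_three_pow_mul hS x hy k]
    _ = h (x + n) y - h x y + 3 ^ n * e := by
      simpa [horizDiff, add_assoc] using
        Finset.sum_range_sub (fun k : ℕ => h (x + k) y) n
    _ ≤ 2 * C + 3 ^ n * e := by
      linarith [abs_le.1 (hC (x + n) y), abs_le.1 (hC x y)]

theorem nat_mul_le_of_horizDiff_le (hh : IsHarmonic h) (hC : ∀ x y, |h x y| ≤ C)
    (hS : ∀ x y, horizDiff h x y ≤ S) (x y : ℤ) (n : ℕ) :
    n * S ≤ 2 * C + 2 * 3 ^ n * (S - horizDiff h x y) := by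
  have hdef : 0 ≤ 3 ^ n * (S - horizDiff h x y) := by
    have := hS x y
    positivity
  rcases lt_trichotomy y 0 with hy | rfl | hy
  · -- `-h (-x) (-y)` is harmonic with the horizontal increments of `h` reflected in `(-1/2, 0)`,
    -- which moves the point into the upper half-plane.
    set g : ℤ → ℤ → ℝ := -fun x y => h (-x) (-y)
    have hg : ∀ x y, horizDiff g x y = horizDiff h (-x - 1) (-y) := fun x y => by
      simp only [g, horizDiff, Pi.neg_apply, neg_add', sub_add_cancel]
      ring
    have := nat_mul_le_of_horizDiff_le_of_pos hh.comp_neg.neg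
      (fun x y => by simpa [g] using hC (-x) (-y)) (fun x y => hg x y ▸ hS _ _) (-x - 1)
      (neg_pos.2 hy) n
    rw [hg, show -(-x - 1) - 1 = x by ring, neg_neg] at this
    linarith
  · have hpos := nat_mul_le_of_horizDiff_le_of_pos hh hC hS x one_pos n
    have haxis := hh.horizDiff.sub_le_two_mul hS x
    have : (3 : ℝ) ^ n * (S - horizDiff h x 1) ≤ 3 ^ n * (2 * (S - horizDiff h x 0)) := by
      gcongr
    linarith
  · linarith [nat_mul_le_of_horizDiff_le_of_pos hh hC hS x hy n]

theorem horizDiff_nonpos (hh : IsHarmonic h) (hC : ∀ x y, |h x y| ≤ C) (x y : ℤ) :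
    horizDiff h x y ≤ 0 := by
  have hbdd : BddAbove (Set.range fun p : ℤ × ℤ => horizDiff h p.1 p.2) := by
    refine ⟨2 * C, ?_⟩
    rintro _ ⟨⟨x, y⟩, rfl⟩
    show h (x + 1) y - h x y ≤ 2 * C
    linarith [abs_le.1 (hC (x + 1) y), abs_le.1 (hC x y)]
  set S := sSup (Set.range fun p : ℤ × ℤ => horizDiff h p.1 p.2)
  have hS : ∀ x y, horizDiff h x y ≤ S := fun x y => le_csSup hbdd ⟨(x, y), rfl⟩
  suffices S ≤ 0 from (hS x y).trans this
  refine nonpos_of_forall_nat_mul_le (b := 2 * C) fun n => ?_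
  have hsup : S ≤ S - (n * S - 2 * C) / (2 * 3 ^ n) := by
    refine csSup_le (Set.range_nonempty _) ?_
    rintro _ ⟨⟨x, y⟩, rfl⟩
    have := nat_mul_le_of_horizDiff_le hh hC hS x y n
    rw [le_sub_iff_add_le, ← le_sub_iff_add_le', div_le_iff₀ (by positivity)]
    linarith
  have : (n * S - 2 * C) / (2 * 3 ^ n) ≤ 0 := by linarith
  rwa [div_le_iff₀ (by positivity), zero_mul, sub_nonpos] at this

namespace IsHarmonic

theorem row_eq (hh : IsHarmonic h) (hC : ∀ x y, |h x y| ≤ C) (x x' y : ℤ) :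
    h x y = h x' y := by
  have hper : Function.Periodic (h · y) 1 := fun x => le_antisymm
    (sub_nonpos.1 (horizDiff_nonpos hh hC x y))
    (by simpa [HalfPlaneLattice.horizDiff] using horizDiff_nonpos hh.neg (by simpa using hC) x y)
  simpa using (hper.int_mul_eq x).trans (hper.int_mul_eq x').symm

theorem add_eq_two_mul_of_row_eq (hh : IsHarmonic h) (hrow : ∀ x x' y, h x y = h x' y)
    (x y : ℤ) : h x (y + 1) + h x (y - 1) = 2 * h x y := by
  rcases eq_or_ne y 0 with rfl | hy
  · rw [zero_add, zero_sub]
    linarith [hh.on_axis x]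
  · linarith [hh.off_axis x y hy, hrow (x + y.sign) x y]

end IsHarmonic

end HalfPlaneLattice

open HalfPlaneLattice

/-- Every bounded harmonic function for the simple random walk on the half-plane
one-way lattice ℍ is constant: the Poisson boundary is trivial. -/
theorem bounded_harmonic_constant (h : ℤ → ℤ → ℝ)
    (hbdd : ∃ C : ℝ, ∀ x y : ℤ, |h x y| ≤ C)
    (hharm : ∀ x y : ℤ, y ≠ 0 →
      h x y = (1 / 3) * (h x (y + 1) + h x (y - 1) + h (x + Int.sign y) y))
    (hharm0 : ∀ x : ℤ, h x 0 = (1 / 2) * (h x 1 + h x (-1))) :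
    ∀ x y x' y' : ℤ, h x y = h x' y' := by
  obtain ⟨C, hC⟩ := hbdd
  have hh : IsHarmonic h := ⟨hharm, hharm0⟩
  intro x y x' y'
  calc h x y = h 0 y := hh.row_eq hC x 0 y
    _ = h 0 y' := eq_of_bounded_of_add_eq_two_mul (fun y => hC 0 y)
      (hh.add_eq_two_mul_of_row_eq (hh.row_eq hC) 0) y y'
    _ = h x' y' := hh.row_eq hC 0 x' y'
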